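/- Let V be a 2-dimensional real normed space satisfying the Aronszajn criterion. If p and q are nonzero vectors with ‖p + q‖ = ‖p - q‖, then there exists a linear isometric equivalence μ : V → V such that μ(p) = p and μ(q) = -q. -/

import Mathlib

/-!
Call `t` admissible when `‖p + t • q‖ = ‖p - t • q‖`. Applying the Aronszajn criterion to the
pairs `(p ± t • q, p)` and `(p ± t • q, ±(t - s) • q)` shows that the admissible `t` are stable under
halving and under reflections `s ↦ 2 t - s`, so they form an additive subgroup of `ℝ`. It
contains every `2⁻ⁿ`, hence is dense, and it is closed: every `t` is admissible. By homogeneity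
`‖a • p + b • q‖ = ‖a • p - b • q‖` for all `a, b`, and `p, q` form a basis of `V`, so the linear
map fixing `p` and negating `q` is an isometry.
-/

open Module

def AronszajnCriterion (V : Type*) [NormedAddCommGroup V] : Prop :=
  ∀ v₁ w₁ v₂ w₂ : V, ‖v₁‖ = ‖v₂‖ → ‖w₁‖ = ‖w₂‖ → ‖v₁ - w₁‖ = ‖v₂ - w₂‖ → ‖v₁ + w₁‖ = ‖v₂ + w₂‖

section NormedSpace

variable {V : Type*} [NormedAddCommGroup V] [NormedSpace ℝ V] {p q : V}

theorem linearIndependent_pair_of_norm_add_eq_norm_sub (hp : p ≠ 0) (hq : q ≠ 0)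
    (hpq : ‖p + q‖ = ‖p - q‖) : LinearIndependent ℝ ![p, q] := by
  refine (LinearIndependent.pair_iff' hp).2 fun a hap => hq ?_
  have habs : |1 + a| = |1 - a| := by
    have : ‖(1 + a) • p‖ = ‖(1 - a) • p‖ := by rwa [add_smul, sub_smul, one_smul, hap]
    rwa [norm_smul, norm_smul, Real.norm_eq_abs, Real.norm_eq_abs,
      mul_left_inj' (norm_ne_zero_iff.2 hp)] at this
  have ha : a = 0 := by
    rcases abs_eq_abs.1 habs with h | h <;> linarith
  rw [← hap, ha, zero_smul]

theorem norm_smul_add_smul_eq_norm_smul_sub_smul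
    (h : ∀ t : ℝ, ‖p + t • q‖ = ‖p - t • q‖) (a b : ℝ) :
    ‖a • p + b • q‖ = ‖a • p - b • q‖ := by
  rcases eq_or_ne a 0 with rfl | ha
  · simp
  · have hplus : a • p + b • q = a • (p + (b / a) • q) := by
      rw [smul_add, smul_smul, mul_div_cancel₀ _ ha]
    have hminus : a • p - b • q = a • (p - (b / a) • q) := by
      rw [smul_sub, smul_smul, mul_div_cancel₀ _ ha]
    rw [hplus, hminus, norm_smul, norm_smul, h]

theorem exists_linearIsometryEquiv_eq_and_eq_neg [FiniteDimensional ℝ V]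
    (hdim : finrank ℝ V = 2) (hli : LinearIndependent ℝ ![p, q])
    (h : ∀ a b : ℝ, ‖a • p + b • q‖ = ‖a • p - b • q‖) :
    ∃ μ : V ≃ₗᵢ[ℝ] V, μ p = p ∧ μ q = -q := by
  let B : Basis (Fin 2) ℝ V :=
    basisOfLinearIndependentOfCardEqFinrank hli (by rw [hdim, Fintype.card_fin])
  have hB : ∀ i, B i = ![p, q] i := fun i => by
    simp [B, coe_basisOfLinearIndependentOfCardEqFinrank]
  let f : V →ₗ[ℝ] V := B.constr ℝ ![p, -q]
  have hfp : f p = p := by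
    simpa only [hB, Matrix.cons_val_zero] using B.constr_basis ℝ ![p, -q] 0
  have hfq : f q = -q := by
    simpa only [hB, Matrix.cons_val_one, Matrix.cons_val_zero] using B.constr_basis ℝ ![p, -q] 1
  have hnorm : ∀ x, ‖f x‖ = ‖x‖ := by
    intro x
    have hx : x = B.repr x 0 • p + B.repr x 1 • q := by
      conv_lhs => rw [← B.sum_repr x]
      rw [Fin.sum_univ_two, hB 0, hB 1]
      rfl
    rw [hx, map_add, map_smul, map_smul, hfp, hfq, smul_neg, ← sub_eq_add_neg, h]
  let μ : V ≃ₗᵢ[ℝ] V := LinearIsometry.toLinearIsometryEquiv ⟨f, hnorm⟩ rfl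
  exact ⟨μ, hfp, hfq⟩

end NormedSpace

namespace AronszajnCriterion

variable {V : Type*} [NormedAddCommGroup V] [NormedSpace ℝ V] (hA : AronszajnCriterion V)
  {p q : V}

include hA

theorem norm_add_half_smul_eq {t : ℝ} (ht : ‖p + t • q‖ = ‖p - t • q‖) :
    ‖p + (t / 2) • q‖ = ‖p - (t / 2) • q‖ := by
  have hdouble : ‖p + t • q + p‖ = ‖p - t • q + p‖ := by
    refine hA _ p _ p ht rfl ?_
    rw [add_sub_cancel_left, sub_sub_cancel_left, norm_neg]
  have hplus : p + (t / 2) • q = (2 : ℝ)⁻¹ • (p + t • q + p) := by module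
  have hminus : p - (t / 2) • q = (2 : ℝ)⁻¹ • (p - t • q + p) := by module
  rw [hplus, hminus, norm_smul, norm_smul, hdouble]

theorem norm_add_two_mul_sub_smul_eq {s t : ℝ} (hs : ‖p + s • q‖ = ‖p - s • q‖)
    (ht : ‖p + t • q‖ = ‖p - t • q‖) :
    ‖p + (2 * t - s) • q‖ = ‖p - (2 * t - s) • q‖ := by
  have hplus : p + (2 * t - s) • q = p + t • q + (t - s) • q := by module
  have hminus : p - (2 * t - s) • q = p - t • q + -((t - s) • q) := by module
  rw [hplus, hminus]
  refine hA _ _ _ _ ht (norm_neg _).symm ?_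
  convert hs using 2 <;> module

def admissibleAddSubgroup (p q : V) : AddSubgroup ℝ :=
  .ofSub {t | ‖p + t • q‖ = ‖p - t • q‖} ⟨0, by simp⟩ fun s hs t ht => by
    rw [show s + -t = 2 * (s / 2) - t by ring]
    exact hA.norm_add_two_mul_sub_smul_eq ht (hA.norm_add_half_smul_eq hs)

theorem norm_add_smul_eq_norm_sub_smul (hpq : ‖p + q‖ = ‖p - q‖) (t : ℝ) :
    ‖p + t • q‖ = ‖p - t • q‖ := by
  let S := hA.admissibleAddSubgroup p q
  have hpow : ∀ n : ℕ, ((2 : ℝ) ^ n)⁻¹ ∈ S := by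
    intro n
    induction n with
    | zero =>
      show ‖p + ((2 : ℝ) ^ 0)⁻¹ • q‖ = _
      simpa using hpq
    | succ n ih =>
      have := hA.norm_add_half_smul_eq ih
      rwa [div_eq_mul_inv, ← mul_inv, ← pow_succ] at this
  have hdense : Dense (S : Set ℝ) := S.dense_of_not_isolated_zero fun ε hε => by
    obtain ⟨n, hn⟩ := exists_pow_lt_of_lt_one hε (by norm_num : (2 : ℝ)⁻¹ < 1)
    exact ⟨_, hpow n, by positivity, by simpa using hn⟩
  have hclosed : IsClosed (S : Set ℝ) := isClosed_eq (by fun_prop) (by fun_prop)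
  exact hclosed.closure_subset (hdense t)

end AronszajnCriterion

theorem stmt_5 (V : Type*) [NormedAddCommGroup V] [NormedSpace ℝ V]
    [FiniteDimensional ℝ V] (hdim : Module.finrank ℝ V = 2)
    (hA : ∀ v₁ w₁ v₂ w₂ : V, ‖v₁‖ = ‖v₂‖ → ‖w₁‖ = ‖w₂‖ → ‖v₁ - w₁‖ = ‖v₂ - w₂‖ → ‖v₁ + w₁‖ = ‖v₂ + w₂‖)
    (p q : V) (hp : p ≠ 0) (hq : q ≠ 0) (hpq : ‖p + q‖ = ‖p - q‖) :
    ∃ μ : V ≃ₗᵢ[ℝ] V, μ p = p ∧ μ q = -q :=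
  exists_linearIsometryEquiv_eq_and_eq_neg hdim
    (linearIndependent_pair_of_norm_add_eq_norm_sub hp hq hpq)
    (norm_smul_add_smul_eq_norm_smul_sub_smul
      (AronszajnCriterion.norm_add_smul_eq_norm_sub_smul (V := V) hA hpq))
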